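/- Let M > 0, h ≥ 1, R > 1, and let ω ∈ C^∞(ℝ) satisfy |ω(ξ)| ≤ 1 for all ξ, ω(ξ) = 0 for |ξ| ≤ 1, and ω constant on each of {ξ ≥ R} and {ξ ≤ −R}. Define λ(x,ξ) := M·ω(ξ/h)·∫₀ˣ ⟨y⟩^{-1} dy and r(x,ξ) := ∂_ξλ(x,ξ)·∂_xλ(x,ξ). Then for all α, β ∈ ℕ there exists C_{α,β,R} > 0 (depending on α, β, M, R, ω but not on h, x, ξ) such that |∂_ξ^α ∂_x^β r(x,ξ)| ≤ C_{α,β,R}·h^{−1}·⟨ξ⟩_h^{−α}·⟨x⟩^{−β} for all x, ξ ∈ ℝ. -/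

import Mathlib

/-!
Since `∫₀ˣ ⟨y⟩⁻¹ dy = arsinh x`, the symbol separates: `r(x, ξ) = M² h⁻¹ g(ξ/h) ⟨x⟩⁻¹ arsinh x`
with `g = ω' ω`. As `ω` is constant near `±∞`, `g` is smooth with compact support, so every
`ξ`-derivative brings a factor `h⁻¹`, which is `≲ ⟨ξ⟩ₕ⁻¹` on the support `|ξ| ≲ h`. In `x`,
`⟨x⟩⁻¹ arsinh x` lies in a class of symbols of order `-1` which is stable under differentiation,
each derivative lowering the order by one, and whose elements of order `m` are `O(⟨x⟩^(m+1))`.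
-/

open MeasureTheory Real

noncomputable section

/-- The Japanese bracket `⟨x⟩ = (1 + x²)^(1/2)`. -/
def jb (x : ℝ) : ℝ := Real.sqrt (1 + x ^ 2)

/-- `⟨ξ⟩ₕ = (h² + ξ²)^(1/2)`. -/
def jbh (h ξ : ℝ) : ℝ := Real.sqrt (h ^ 2 + ξ ^ 2)

open Asymptotics Filter Topology

lemma one_le_jb (x : ℝ) : 1 ≤ jb x :=
  Real.one_le_sqrt.2 (by nlinarith [sq_nonneg x])

lemma jb_pos (x : ℝ) : 0 < jb x := zero_lt_one.trans_le (one_le_jb x)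

lemma abs_le_jb (x : ℝ) : |x| ≤ jb x := Real.abs_le_sqrt (by linarith)

lemma jb_rpow (x s : ℝ) : jb x ^ s = (1 + x ^ 2) ^ (s / 2) := by
  rw [jb, Real.sqrt_eq_rpow, ← Real.rpow_mul (by positivity)]
  ring_nf

lemma contDiff_jb_rpow (s : ℝ) : ContDiff ℝ (⊤ : ℕ∞) fun x => jb x ^ s := by
  simp_rw [jb_rpow]
  exact ContDiff.rpow_const_of_ne (by fun_prop) fun x => by positivity

lemma hasDerivAt_jb_rpow (s x : ℝ) :
    HasDerivAt (fun x => jb x ^ s) (s * x * jb x ^ (s - 2)) x := by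
  simp_rw [jb_rpow]
  have hw : HasDerivAt (fun x : ℝ => 1 + x ^ 2) (2 * x) x := by
    simpa using ((hasDerivAt_id x).pow 2).const_add 1
  convert hw.rpow_const (p := s / 2) (Or.inl (by positivity)) using 1
  rw [show (s - 2) / 2 = s / 2 - 1 by ring]
  ring

lemma abs_arsinh_le_abs (x : ℝ) : |arsinh x| ≤ |x| := by
  have key : ∀ y, 0 ≤ y → arsinh y ≤ y := fun y hy => by
    simpa using arsinh_le_arsinh.2 (self_le_sinh_iff.2 hy)
  rcases le_total 0 x with hx | hx
  · rw [abs_of_nonneg hx, abs_of_nonneg (arsinh_nonneg_iff.2 hx)]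
    exact key x hx
  · rw [abs_of_nonpos hx, abs_of_nonpos (arsinh_nonpos_iff.2 hx), ← arsinh_neg]
    exact key (-x) (by linarith)

lemma integral_inv_jb (x : ℝ) : ∫ y in (0:ℝ)..x, (jb y)⁻¹ = arsinh x := by
  have hcont : Continuous fun y => (jb y)⁻¹ :=
    (by unfold jb; fun_prop : Continuous jb).inv₀ fun y => (jb_pos y).ne'
  rw [intervalIntegral.integral_eq_sub_of_hasDerivAt (f' := fun y => (jb y)⁻¹)
    (fun y _ => hasDerivAt_arsinh y) (hcont.intervalIntegrable 0 x), arsinh_zero, sub_zero]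

/-- Sums of `c xᵃ ⟨x⟩ˢ` and `c xᵃ ⟨x⟩ˢ arsinh x` of order at most `a + s`. `arsinh` is given
order `0` although it is only `O(⟨x⟩)`, hence the bound `O(⟨x⟩^(m+1))` in `LogSymbol.isBigO`. -/
inductive LogSymbol : ℝ → (ℝ → ℝ) → Prop
  | zero (m : ℝ) : LogSymbol m fun _ => 0
  | one : LogSymbol 0 fun _ => 1
  | arsinh : LogSymbol 0 arsinh
  | add {m : ℝ} {u v : ℝ → ℝ} : LogSymbol m u → LogSymbol m v → LogSymbol m fun x => u x + v x
  | const_mul {m : ℝ} {u : ℝ → ℝ} (c : ℝ) : LogSymbol m u → LogSymbol m fun x => c * u x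
  | mul_id {m : ℝ} {u : ℝ → ℝ} : LogSymbol m u → LogSymbol (m + 1) fun x => x * u x
  | jb_rpow_mul {m : ℝ} {u : ℝ → ℝ} (s : ℝ) :
      LogSymbol m u → LogSymbol (m + s) fun x => jb x ^ s * u x
  | mono {m m' : ℝ} {u : ℝ → ℝ} : LogSymbol m u → m ≤ m' → LogSymbol m' u

namespace LogSymbol

variable {m : ℝ} {u : ℝ → ℝ}

theorem contDiff (hu : LogSymbol m u) : ContDiff ℝ (⊤ : ℕ∞) u := by
  induction hu with
  | zero | one => exact contDiff_const
  | arsinh => exact contDiff_arsinh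
  | add _ _ ihu ihv => exact ihu.add ihv
  | const_mul c _ ih => exact contDiff_const.mul ih
  | mul_id _ ih => exact contDiff_id.mul ih
  | jb_rpow_mul s _ ih => exact (contDiff_jb_rpow s).mul ih
  | mono _ _ ih => exact ih

theorem deriv (hu : LogSymbol m u) : LogSymbol (m - 1) (deriv u) := by
  induction hu with
  | zero m => simpa using zero (m - 1)
  | one => simpa using zero (0 - 1)
  | arsinh =>
    rw [show _root_.deriv Real.arsinh = fun x => (jb x)⁻¹ from
      funext fun x => (hasDerivAt_arsinh x).deriv]
    convert one.jb_rpow_mul (-1) using 1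
    · norm_num
    · ext x
      rw [Real.rpow_neg_one, mul_one]
  | @add m u v hu hv ihu ihv =>
    rw [show _root_.deriv (fun x => u x + v x) = fun x => _root_.deriv u x + _root_.deriv v x from
      funext fun x => deriv_add (hu.contDiff.differentiable (by simp) x)
        (hv.contDiff.differentiable (by simp) x)]
    exact ihu.add ihv
  | const_mul c _ ih =>
    rw [deriv_const_mul_field']
    exact ih.const_mul c
  | @mul_id m u hu ih =>
    have hd : _root_.deriv (fun x => x * u x) = fun x => u x + x * _root_.deriv u x := by
      funext x
      rw [((hasDerivAt_id' x).fun_mul (hu.contDiff.differentiable (by simp) x).hasDerivAt).deriv]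
      ring
    rw [hd]
    exact hu.add (ih.mul_id.mono (by linarith)) |>.mono (by linarith)
  | @jb_rpow_mul m u s hu ih =>
    have hd : _root_.deriv (fun x => jb x ^ s * u x)
        = fun x => s * (x * (jb x ^ (s - 2) * u x)) + jb x ^ s * _root_.deriv u x := by
      funext x
      rw [((hasDerivAt_jb_rpow s x).fun_mul
        (hu.contDiff.differentiable (by simp) x).hasDerivAt).deriv]
      ring
    rw [hd]
    exact ((((hu.jb_rpow_mul (s - 2)).mul_id).const_mul s).mono (by linarith)).add
      ((ih.jb_rpow_mul s).mono (by linarith))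
  | mono _ hle ih => exact ih.mono (by linarith)

theorem iteratedDeriv (hu : LogSymbol m u) (n : ℕ) :
    LogSymbol (m - n) (iteratedDeriv n u) := by
  induction n with
  | zero => simpa using hu
  | succ n ih =>
    rw [iteratedDeriv_succ]
    exact ih.deriv.mono (by push_cast; linarith)

theorem isBigO (hu : LogSymbol m u) : u =O[⊤] fun x => jb x ^ (m + 1) := by
  induction hu with
  | zero => exact isBigO_zero _ _
  | one => exact IsBigO.of_norm_le fun x => by simpa using one_le_jb x
  | arsinh =>
    refine IsBigO.of_norm_le fun x => ?_
    simpa using (abs_arsinh_le_abs x).trans (abs_le_jb x)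
  | add _ _ ihu ihv => exact ihu.add ihv
  | const_mul c _ ih => exact ih.const_mul_left c
  | @mul_id m u _ ih =>
    refine (IsBigO.mul (IsBigO.of_norm_le abs_le_jb) ih).congr_right fun x => ?_
    rw [Real.rpow_add_one (jb_pos x).ne' (m + 1), mul_comm]
  | @jb_rpow_mul m u s _ ih =>
    refine ((isBigO_refl (fun x => jb x ^ s) ⊤).mul ih).congr_right fun x => ?_
    rw [← Real.rpow_add (jb_pos x)]
    ring_nf
  | mono _ hle ih =>
    refine ih.trans (IsBigO.of_norm_le fun x => ?_)
    rw [Real.norm_of_nonneg (Real.rpow_nonneg (jb_pos x).le _)]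
    exact Real.rpow_le_rpow_of_exponent_le (one_le_jb x) (by linarith)

end LogSymbol

lemma isBigO_iteratedDeriv_jb_inv_mul_arsinh (n : ℕ) :
    iteratedDeriv n (fun x => jb x ^ (-1 : ℝ) * arsinh x) =O[⊤] fun x => jb x ^ (-(n : ℝ)) :=
  ((LogSymbol.arsinh.jb_rpow_mul (-1)).iteratedDeriv n).isBigO.congr_right fun x => by ring_nf

theorem HasCompactSupport.iteratedDeriv {𝕜 F : Type*} [NontriviallyNormedField 𝕜]
    [NormedAddCommGroup F] [NormedSpace 𝕜 F] {f : 𝕜 → F} (hf : HasCompactSupport f) (n : ℕ) :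
    HasCompactSupport (iteratedDeriv n f) := by
  induction n with
  | zero => simpa using hf
  | succ n ih => simpa only [iteratedDeriv_succ] using ih.deriv

lemma hasCompactSupport_deriv_of_constant_on_rays {ω : ℝ → ℝ} {R : ℝ}
    (hp : ∀ a b, R ≤ a → R ≤ b → ω a = ω b) (hm : ∀ a b, a ≤ -R → b ≤ -R → ω a = ω b) :
    HasCompactSupport (deriv ω) := by
  refine HasCompactSupport.intro (isCompact_Icc (a := -R) (b := R)) fun t ht => ?_
  obtain ⟨c, hc⟩ : ∃ c, ω =ᶠ[𝓝 t] fun _ => c := by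
    rcases not_and_or.1 ht with ht | ht
    · exact ⟨ω (-R), eventually_of_mem (Iio_mem_nhds (not_le.1 ht)) fun s hs =>
        hm s (-R) hs.le le_rfl⟩
    · exact ⟨ω R, eventually_of_mem (Ioi_mem_nhds (not_le.1 ht)) fun s hs =>
        hp s R hs.le le_rfl⟩
  rw [hc.deriv_eq, deriv_const]

lemma jbh_eq_mul_jb {h : ℝ} (hh : 0 < h) (ξ : ℝ) : jbh h ξ = h * jb (h⁻¹ * ξ) := by
  rw [jbh, jb, ← Real.sqrt_sq hh.le, ← Real.sqrt_mul (sq_nonneg h), Real.sqrt_sq hh.le]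
  congr 1
  field_simp

lemma jbh_pos {h : ℝ} (hh : 0 < h) (ξ : ℝ) : 0 < jbh h ξ := Real.sqrt_pos.2 (by positivity)

lemma jb_le_jb {x y : ℝ} (hxy : |x| ≤ |y|) : jb x ≤ jb y :=
  Real.sqrt_le_sqrt (by nlinarith [sq_abs x, sq_abs y, abs_nonneg x])

/-- The left-hand side is the `k`-th derivative of `ξ ↦ g (ξ / h)`; it vanishes unless `|ξ| ≲ h`,
and there `⟨ξ⟩ₕ ≲ h`. -/
lemma exists_bound_iteratedDeriv_comp_inv_mul {g : ℝ → ℝ} {k : ℕ} (hg : ContDiff ℝ k g)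
    (hgc : HasCompactSupport g) :
    ∃ C > 0, ∀ h > 0, ∀ ξ, h⁻¹ ^ k * |iteratedDeriv k g (h⁻¹ * ξ)| ≤ C * jbh h ξ ^ (-(k : ℝ)) := by
  obtain ⟨B, hB⟩ :=
    (hg.continuous_iteratedDeriv k le_rfl).bounded_above_of_compact_support (hgc.iteratedDeriv k)
  obtain ⟨r, hr⟩ := (hgc.iteratedDeriv k).isCompact.isBounded.subset_closedBall 0
  have hC : 0 < max B 1 * jb r ^ k := mul_pos (lt_max_of_lt_right one_pos) (pow_pos (jb_pos r) k)
  refine ⟨_, hC, fun h hh ξ => ?_⟩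
  have hjbh := jbh_pos hh ξ
  by_cases hz : iteratedDeriv k g (h⁻¹ * ξ) = 0
  · rw [hz, abs_zero, mul_zero]
    exact mul_nonneg hC.le (Real.rpow_nonneg hjbh.le _)
  have hξ : |h⁻¹ * ξ| ≤ |r| := by
    simpa using (hr (subset_tsupport _ hz)).trans (le_abs_self r)
  have hscale : h⁻¹ ^ k = jb (h⁻¹ * ξ) ^ k * jbh h ξ ^ (-(k : ℝ)) := by
    rw [Real.rpow_neg hjbh.le, Real.rpow_natCast, jbh_eq_mul_jb hh, mul_pow, mul_inv,
      mul_left_comm, mul_inv_cancel₀ (pow_ne_zero _ (jb_pos _).ne'), mul_one, inv_pow]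
  calc h⁻¹ ^ k * |iteratedDeriv k g (h⁻¹ * ξ)|
      ≤ (jb r ^ k * jbh h ξ ^ (-(k : ℝ))) * max B 1 := by
        rw [hscale]
        gcongr
        · exact mul_nonneg (pow_nonneg (jb_pos r).le k) (Real.rpow_nonneg hjbh.le _)
        · exact (jb_pos _).le
        · exact jb_le_jb hξ
        · exact (hB _).trans (le_max_left _ _)
    _ = max B 1 * jb r ^ k * jbh h ξ ^ (-(k : ℝ)) := by ring

lemma deriv_mul_deriv_eq_separated (M h : ℝ) {ω : ℝ → ℝ} (hω : Differentiable ℝ ω) (ξ x : ℝ) :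
    deriv (fun ζ => M * ω (ζ / h) * ∫ y in (0:ℝ)..x, (jb y)⁻¹) ξ *
        deriv (fun z => M * ω (ξ / h) * ∫ y in (0:ℝ)..z, (jb y)⁻¹) x =
      M ^ 2 * h⁻¹ * (deriv ω (h⁻¹ * ξ) * ω (h⁻¹ * ξ)) * (jb x ^ (-1 : ℝ) * arsinh x) := by
  simp only [integral_inv_jb]
  have hξ : HasDerivAt (fun ζ => M * ω (ζ / h) * arsinh x)
      (M * (deriv ω (ξ / h) * (1 / h)) * arsinh x) ξ :=
    ((((hω _).hasDerivAt.comp ξ ((hasDerivAt_id ξ).div_const h))).const_mul M).mul_const _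
  have hx : HasDerivAt (fun z => M * ω (ξ / h) * arsinh z) (M * ω (ξ / h) * (jb x)⁻¹) x :=
    (hasDerivAt_arsinh x).const_mul _
  rw [hξ.deriv, hx.deriv, Real.rpow_neg_one, div_eq_inv_mul]
  ring

lemma iteratedDeriv_iteratedDeriv_mul_comp_const_mul {a : ℝ → ℝ} {α : ℕ} (ha : ContDiff ℝ α a)
    (K c : ℝ) (b : ℝ → ℝ) (β : ℕ) (x ξ : ℝ) :
    iteratedDeriv α (fun ξ' => iteratedDeriv β (fun x' => K * a (c * ξ') * b x') x) ξ =
      K * (c ^ α * iteratedDeriv α a (c * ξ)) * iteratedDeriv β b x := by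
  simp only [iteratedDeriv_const_mul_field, iteratedDeriv_mul_const_field,
    iteratedDeriv_comp_const_mul ha]

theorem stmt9_general (M R : ℝ) (hM : 0 < M)
    (ω : ℝ → ℝ) (hω : ContDiff ℝ (⊤ : ℕ∞) ω)
    (hωcp : ∀ ξ₁ ξ₂ : ℝ, R ≤ ξ₁ → R ≤ ξ₂ → ω ξ₁ = ω ξ₂)
    (hωcm : ∀ ξ₁ ξ₂ : ℝ, ξ₁ ≤ -R → ξ₂ ≤ -R → ω ξ₁ = ω ξ₂) :
    ∀ α β : ℕ, ∃ C > 0, ∀ h : ℝ, 1 ≤ h → ∀ x ξ : ℝ,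
      |iteratedDeriv α
          (fun ξ' => iteratedDeriv β
            (fun x' =>
              deriv (fun ζ => M * ω (ζ / h) * ∫ y in (0:ℝ)..x', (jb y)⁻¹) ξ' *
                deriv (fun z => M * ω (ξ' / h) * ∫ y in (0:ℝ)..z, (jb y)⁻¹) x') x) ξ| ≤
        C * h⁻¹ * jbh h ξ ^ (-(α : ℝ)) * jb x ^ (-(β : ℝ)) := by
  intro α β
  have hg : ContDiff ℝ α fun t => deriv ω t * ω t :=
    ((contDiff_infty_iff_deriv.1 hω).2.mul hω).of_le (mod_cast le_top)
  obtain ⟨Cg, hCg, hg_bound⟩ := exists_bound_iteratedDeriv_comp_inv_mul hg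
    (hasCompactSupport_deriv_of_constant_on_rays hωcp hωcm).mul_right
  obtain ⟨Cf, hCf, hf_bound⟩ := (isBigO_iteratedDeriv_jb_inv_mul_arsinh β).exists_pos
  refine ⟨M ^ 2 * Cg * Cf, by positivity, fun h hh x ξ => ?_⟩
  simp only [deriv_mul_deriv_eq_separated M h (hω.differentiable (by simp))]
  rw [iteratedDeriv_iteratedDeriv_mul_comp_const_mul hg]
  have h0 : 0 < h := one_pos.trans_le hh
  have hf := isBigOWith_top.1 hf_bound x
  rw [Real.norm_eq_abs, Real.norm_of_nonneg (Real.rpow_nonneg (jb_pos x).le _)] at hf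
  calc _ = M ^ 2 * h⁻¹ * (h⁻¹ ^ α * |iteratedDeriv α (fun t => deriv ω t * ω t) (h⁻¹ * ξ)|) *
        |iteratedDeriv β (fun x => jb x ^ (-1 : ℝ) * arsinh x) x| := by
        simp only [abs_mul, abs_pow, sq_abs, abs_inv, abs_of_pos h0]
    _ ≤ M ^ 2 * h⁻¹ * (Cg * jbh h ξ ^ (-(α : ℝ))) * (Cf * jb x ^ (-(β : ℝ))) := by
        gcongr M ^ 2 * h⁻¹ * ?_ * ?_
        · have := Real.rpow_nonneg (jbh_pos h0 ξ).le (-(α : ℝ))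
          positivity
        · exact hg_bound h h0 ξ
    _ = M ^ 2 * Cg * Cf * h⁻¹ * jbh h ξ ^ (-(α : ℝ)) * jb x ^ (-(β : ℝ)) := by ring

/-- for `λ(x,ξ) = M·ω(ξ/h)·∫₀ˣ ⟨y⟩⁻¹ dy` and
`r(x,ξ) = ∂_ξλ(x,ξ)·∂_xλ(x,ξ)`, the estimates
`|∂_ξ^α ∂_x^β r(x,ξ)| ≤ C·h⁻¹·⟨ξ⟩ₕ^{-α}·⟨x⟩^{-β}` hold with a constant which may
depend on `α, β, M, R, ω` but not on `h, x, ξ`. -/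
theorem stmt9 (M R : ℝ) (hM : 0 < M) (hR : 1 < R)
    (ω : ℝ → ℝ) (hω : ContDiff ℝ (⊤ : ℕ∞) ω) (hωb : ∀ ξ : ℝ, |ω ξ| ≤ 1)
    (hω0 : ∀ ξ : ℝ, |ξ| ≤ 1 → ω ξ = 0)
    (hωcp : ∀ ξ₁ ξ₂ : ℝ, R ≤ ξ₁ → R ≤ ξ₂ → ω ξ₁ = ω ξ₂)
    (hωcm : ∀ ξ₁ ξ₂ : ℝ, ξ₁ ≤ -R → ξ₂ ≤ -R → ω ξ₁ = ω ξ₂) :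
    ∀ α β : ℕ, ∃ C > 0, ∀ h : ℝ, 1 ≤ h → ∀ x ξ : ℝ,
      |iteratedDeriv α
          (fun ξ' => iteratedDeriv β
            (fun x' =>
              deriv (fun ζ => M * ω (ζ / h) * ∫ y in (0:ℝ)..x', (jb y)⁻¹) ξ' *
                deriv (fun z => M * ω (ξ' / h) * ∫ y in (0:ℝ)..z, (jb y)⁻¹) x') x) ξ| ≤
        C * h⁻¹ * jbh h ξ ^ (-(α : ℝ)) * jb x ^ (-(β : ℝ)) :=
  stmt9_general M R hM ω hω hωcp hωcm
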